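/- Let ν be a probability measure on ℝ such that the identity function y ↦ y is ν-integrable, and let q ∈ [0,1]. Let Π be the set of probability measures π on ℝ × Bool such that the pushforward of π under the first projection equals ν and π(ℝ × {true}) = q. Then inf_{π ∈ Π} ∫ y · 1{d = true} dπ(y, d) = sup_{φ ∈ ℝ} ( φ·q + ∫ min(y − φ, 0) dν(y) ). -/

import Mathlib

/-!
A coupling `π` is the same thing as a split `ν = ν₁ + ν₀` of the marginal, `ν₁` being the law of
`y` on `{d = true}`; its objective value is `∫ y dν₁`. For every `φ`, the pointwise inequality
`φ·1{d} + min (y - φ) 0 ≤ y·1{d}` gives weak duality, with slack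
`∫ (y - φ)⁺ dν₁ + ∫ (φ - y)⁺ dν₀`. This slack vanishes for the split that loads the lowest
`q`-mass of `ν` onto `{d = true}`, cutting at a `q`-quantile `φ` and dividing the atom at `φ`.
For `q ∈ {0, 1}` a quantile need not exist, and the supremum is only approached as `φ → ∓∞`.
-/

open MeasureTheory Set Filter Topology ProbabilityTheory
open scoped ENNReal

lemma csInf_eq_ciSup_of_forall_le {ι α : Type*} [Nonempty ι] [ConditionallyCompleteLattice α]
    {S : Set α} {g : ι → α} (hweak : ∀ r ∈ S, ∀ i, g i ≤ r) {r : α} (hr : r ∈ S)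
    (hle : r ≤ ⨆ i, g i) : sInf S = ⨆ i, g i :=
  le_antisymm ((csInf_le ⟨g (Classical.arbitrary ι), fun s hs => hweak s hs _⟩ hr).trans hle)
    (le_csInf ⟨r, hr⟩ fun s hs => ciSup_le (hweak s hs))

section BoolCoupling

variable {α : Type*} [MeasurableSpace α]

noncomputable def boolCoupling (ν₁ ν₀ : Measure α) : Measure (α × Bool) :=
  ν₁.map (·, true) + ν₀.map (·, false)

lemma map_fst_boolCoupling (ν₁ ν₀ : Measure α) :
    (boolCoupling ν₁ ν₀).map Prod.fst = ν₁ + ν₀ := by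
  rw [boolCoupling, Measure.map_add _ _ measurable_fst,
    Measure.map_map measurable_fst measurable_prodMk_right,
    Measure.map_map measurable_fst measurable_prodMk_right]
  exact congrArg₂ (· + ·) Measure.map_id Measure.map_id

lemma boolCoupling_univ_prod_true (ν₁ ν₀ : Measure α) :
    boolCoupling ν₁ ν₀ (univ ×ˢ {true}) = ν₁ univ := by
  have hS : MeasurableSet (univ ×ˢ {true} : Set (α × Bool)) :=
    MeasurableSet.univ.prod (.singleton true)
  simp [boolCoupling, Measure.map_apply measurable_prodMk_right hS]

lemma boolCoupling_comap (π : Measure (α × Bool)) :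
    boolCoupling (π.comap (·, true)) (π.comap (·, false)) = π := by
  have hrange : (range fun x : α => (x, false)) = (range fun x : α => (x, true))ᶜ := by
    ext ⟨x, b⟩; cases b <;> simp
  rw [boolCoupling, (measurableEmbedding_prod_mk_right true).map_comap,
    (measurableEmbedding_prod_mk_right false).map_comap, hrange,
    Measure.restrict_add_restrict_compl
      (measurableEmbedding_prod_mk_right true).measurableSet_range]

lemma integral_boolCoupling_ite {ν₁ : Measure ℝ} (ν₀ : Measure ℝ) (h₁ : Integrable id ν₁) :
    ∫ yd, (if yd.2 = true then yd.1 else 0) ∂(boolCoupling ν₁ ν₀) = ∫ y, y ∂ν₁ := by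
  have e₁ := measurableEmbedding_prod_mk_right (β := ℝ) true
  have e₀ := measurableEmbedding_prod_mk_right (β := ℝ) false
  rw [boolCoupling, integral_add_measure, e₁.integral_map, e₀.integral_map]
  · simp
  · rw [e₁.integrable_map_iff]; exact h₁
  · rw [e₀.integrable_map_iff]; simp [Function.comp_def]

end BoolCoupling

noncomputable def splitValues (ν : Measure ℝ) (q : ℝ) : Set ℝ :=
  {r | ∃ ν₁ ν₀ : Measure ℝ, ν₁ + ν₀ = ν ∧ ν₁.real univ = q ∧ r = ∫ y, y ∂ν₁}

lemma setOf_coupling_eq_splitValues (ν : Measure ℝ) [IsProbabilityMeasure ν]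
    (hν : Integrable id ν) (q : ℝ) :
    {r : ℝ | ∃ π : Measure (ℝ × Bool), IsProbabilityMeasure π ∧
        π.map Prod.fst = ν ∧ (π (Set.univ ×ˢ {true})).toReal = q ∧
        r = ∫ yd : ℝ × Bool, (if yd.2 = true then yd.1 else 0) ∂π} = splitValues ν q := by
  have hν₁ : ∀ {ν₁ ν₀ : Measure ℝ}, ν₁ + ν₀ = ν → Integrable id ν₁ := fun hsum =>
    hν.mono_measure (hsum ▸ Measure.le_add_right le_rfl)
  ext r
  constructor
  · rintro ⟨π, -, hfst, hmass, rfl⟩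
    have hπ := boolCoupling_comap π
    have hsum : π.comap (·, true) + π.comap (·, false) = ν := by
      rw [← map_fst_boolCoupling, hπ, hfst]
    refine ⟨_, _, hsum, ?_, ?_⟩
    · rwa [measureReal_def, ← boolCoupling_univ_prod_true _ (π.comap (·, false)), hπ]
    · rw [← integral_boolCoupling_ite _ (hν₁ hsum), hπ]
  · rintro ⟨ν₁, ν₀, hsum, hmass, rfl⟩
    have hfst : (boolCoupling ν₁ ν₀).map Prod.fst = ν := (map_fst_boolCoupling ν₁ ν₀).trans hsum
    have : IsProbabilityMeasure ((boolCoupling ν₁ ν₀).map Prod.fst) := hfst ▸ inferInstance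
    exact ⟨boolCoupling ν₁ ν₀, Measure.isProbabilityMeasure_of_map Prod.fst, hfst,
      by rwa [boolCoupling_univ_prod_true], (integral_boolCoupling_ite ν₀ (hν₁ hsum)).symm⟩

lemma MeasureTheory.Integrable.min_sub_const_zero {ν : Measure ℝ} [IsFiniteMeasure ν]
    (hν : Integrable id ν) (φ : ℝ) : Integrable (fun y => min (y - φ) 0) ν :=
  (hν.sub (integrable_const φ)).inf (integrable_const 0)

noncomputable def dualObjective (ν : Measure ℝ) (q φ : ℝ) : ℝ :=
  φ * q + ∫ y, min (y - φ) 0 ∂ν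

section Split

variable {ν ν₁ ν₀ : Measure ℝ} [IsFiniteMeasure ν]

lemma integral_sub_dualObjective_eq (hν : Integrable id ν) (hsum : ν₁ + ν₀ = ν) (φ : ℝ) :
    ∫ y, y ∂ν₁ - dualObjective ν (ν₁.real univ) φ =
      ∫ y, max (y - φ) 0 ∂ν₁ + ∫ y, max (φ - y) 0 ∂ν₀ := by
  subst hsum
  have := isFiniteMeasure_of_le (ν₁ + ν₀) (Measure.le_add_right le_rfl)
  have := isFiniteMeasure_of_le (ν₁ + ν₀) (Measure.le_add_left le_rfl)
  obtain ⟨h₁, h₀⟩ : Integrable (fun y => y) ν₁ ∧ Integrable (fun y => y) ν₀ :=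
    integrable_add_measure.1 hν
  have h₁' : Integrable (fun y => y - φ) ν₁ := h₁.sub (integrable_const φ)
  have hpos : ∀ y : ℝ, max (y - φ) 0 = y - φ - min (y - φ) 0 := fun y => by
    rcases le_total (y - φ) 0 with h | h <;> simp [h]
  have hneg : ∀ y : ℝ, max (φ - y) 0 = -min (y - φ) 0 := fun y => by
    rw [← neg_sub, ← neg_zero, max_neg_neg, neg_zero]
  simp_rw [hpos, hneg]
  rw [dualObjective, integral_sub h₁' (h₁.min_sub_const_zero φ),
    integral_sub h₁ (integrable_const φ), integral_neg,
    integral_add_measure (h₁.min_sub_const_zero φ) (h₀.min_sub_const_zero φ), integral_const,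
    smul_eq_mul]
  ring

lemma dualObjective_le_integral (hν : Integrable id ν) (hsum : ν₁ + ν₀ = ν) (φ : ℝ) :
    dualObjective ν (ν₁.real univ) φ ≤ ∫ y, y ∂ν₁ := by
  refine sub_nonneg.1 ?_
  rw [integral_sub_dualObjective_eq hν hsum]
  exact add_nonneg (integral_nonneg fun y => le_max_right _ _)
    (integral_nonneg fun y => le_max_right _ _)

lemma dualObjective_eq_integral (hν : Integrable id ν) (hsum : ν₁ + ν₀ = ν) {φ : ℝ}
    (hle : ∀ᵐ y ∂ν₁, y ≤ φ) (hge : ∀ᵐ y ∂ν₀, φ ≤ y) :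
    dualObjective ν (ν₁.real univ) φ = ∫ y, y ∂ν₁ := by
  refine (sub_eq_zero.1 ?_).symm
  rw [integral_sub_dualObjective_eq hν hsum, integral_eq_zero_of_ae, integral_eq_zero_of_ae,
    add_zero]
  · exact hge.mono fun y hy => max_eq_right (sub_nonpos.2 hy)
  · exact hle.mono fun y hy => max_eq_right (sub_nonpos.2 hy)

lemma dualObjective_le_of_mem_splitValues (hν : Integrable id ν) {q r : ℝ}
    (hr : r ∈ splitValues ν q) (φ : ℝ) : dualObjective ν q φ ≤ r := by
  obtain ⟨ν₁, ν₀, hsum, rfl, rfl⟩ := hr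
  exact dualObjective_le_integral hν hsum φ

end Split

lemma exists_measure_Iio_le_le_measure_Iic (ν : Measure ℝ) [IsProbabilityMeasure ν] {q : ℝ}
    (hq0 : 0 < q) (hq1 : q < 1) :
    ∃ φ, ν (Iio φ) ≤ ENNReal.ofReal q ∧ ENNReal.ofReal q ≤ ν (Iic φ) := by
  set T := {x | q ≤ cdf ν x}
  have hT : T.Nonempty := ((tendsto_cdf_atTop ν).eventually (eventually_ge_nhds hq1)).exists
  have hbdd : BddBelow T := by
    obtain ⟨x, hx⟩ :=
      ((tendsto_cdf_atBot ν).eventually (eventually_lt_nhds hq0)).exists_forall_of_atBot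
    exact ⟨x, fun y hy => not_lt.1 fun hyx => (hx y hyx.le).not_ge hy⟩
  refine ⟨sInf T, ?_, ?_⟩
  · rw [← measure_cdf ν, (cdf ν).measure_Iio (tendsto_cdf_atBot ν), sub_zero]
    refine ENNReal.ofReal_le_ofReal (le_of_tendsto ((cdf ν).mono.tendsto_leftLim _) ?_)
    filter_upwards [self_mem_nhdsWithin] with x hx
    exact (not_le.1 (notMem_of_lt_csInf (s := T) hx hbdd)).le
  · rw [← ofReal_cdf]
    refine ENNReal.ofReal_le_ofReal
      (ge_of_tendsto (((cdf ν).right_continuous _).mono Ioi_subset_Ici_self) ?_)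
    filter_upwards [self_mem_nhdsWithin] with x hx
    obtain ⟨t, ht, htx⟩ := exists_lt_of_csInf_lt hT hx
    exact ht.trans ((cdf ν).mono htx.le)

lemma exists_add_eq_of_measure_Iio_le_le_measure_Iic (ν : Measure ℝ) [IsFiniteMeasure ν] {φ : ℝ}
    {Q : ℝ≥0∞} (hlow : ν (Iio φ) ≤ Q) (hhigh : Q ≤ ν (Iic φ)) :
    ∃ ν₁ ν₀ : Measure ℝ, ν₁ + ν₀ = ν ∧ ν₁ univ = Q ∧ (∀ᵐ y ∂ν₁, y ≤ φ) ∧ ∀ᵐ y ∂ν₀, φ ≤ y := by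
  have hatom : (Q - ν (Iio φ)) + (ν (Iic φ) - Q) = ν {φ} := by
    rw [add_comm, tsub_add_tsub_cancel hhigh hlow, ← Iio_union_right,
      measure_union (by simp) (measurableSet_singleton φ),
      ENNReal.add_sub_cancel_left (measure_ne_top ν _)]
  refine ⟨ν.restrict (Iio φ) + (Q - ν (Iio φ)) • Measure.dirac φ,
    ν.restrict (Ioi φ) + (ν (Iic φ) - Q) • Measure.dirac φ, ?_, ?_, ?_, ?_⟩
  · calc _ = ν.restrict (Iio φ) + ν.restrict {φ} + ν.restrict (Ioi φ) := by
          rw [Measure.restrict_singleton, ← hatom, add_smul]; abel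
      _ = ν := by
          rw [← Measure.restrict_union (by simp) (measurableSet_singleton φ), Iio_union_right,
            ← compl_Iic, Measure.restrict_add_restrict_compl measurableSet_Iic]
  · simp [add_tsub_cancel_of_le hlow]
  · exact ae_add_measure_iff.2 ⟨ae_restrict_of_forall_mem measurableSet_Iio fun y hy => hy.le,
      Measure.ae_smul_measure (by simp [ae_dirac_eq]) _⟩
  · exact ae_add_measure_iff.2 ⟨ae_restrict_of_forall_mem measurableSet_Ioi fun y hy => hy.le,
      Measure.ae_smul_measure (by simp [ae_dirac_eq]) _⟩

section Limits

variable {ν : Measure ℝ} [IsProbabilityMeasure ν]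

lemma tendsto_dualObjective_zero_atBot (hν : Integrable id ν) :
    Tendsto (dualObjective ν 0) atBot (𝓝 0) := by
  unfold dualObjective
  simp only [mul_zero, zero_add]
  have hbound : ∀ᶠ φ in atBot, ∀ᵐ y ∂ν, ‖min (y - φ) 0‖ ≤ |y| := by
    filter_upwards [eventually_le_atBot 0] with φ hφ
    refine ae_of_all _ fun y => abs_le.2 ⟨?_, (min_le_right _ _).trans (abs_nonneg y)⟩
    exact le_min (by linarith [neg_abs_le y]) (neg_nonpos.2 (abs_nonneg y))
  have hlim : ∀ y, (fun _ => (0 : ℝ)) =ᶠ[atBot] fun φ => min (y - φ) 0 := fun y => by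
    filter_upwards [eventually_le_atBot y] with φ hφ
    exact (min_eq_right (by linarith)).symm
  simpa using tendsto_integral_filter_of_dominated_convergence
    (F := fun φ y => min (y - φ) 0) (f := fun _ => (0 : ℝ)) _
    (Eventually.of_forall fun φ => (hν.min_sub_const_zero φ).aestronglyMeasurable) hbound
    hν.abs (ae_of_all _ fun y => tendsto_const_nhds.congr' (hlim y))

lemma tendsto_dualObjective_one_atTop (hν : Integrable id ν) :
    Tendsto (dualObjective ν 1) atTop (𝓝 (∫ y, y ∂ν)) := by
  have hmin : ∀ φ, ∫ y, min y φ ∂ν = dualObjective ν 1 φ := fun φ => by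
    have hsplit : ∫ y, (φ + min (y - φ) 0) ∂ν = φ + ∫ y, min (y - φ) 0 ∂ν := by
      rw [integral_add (integrable_const φ) (hν.min_sub_const_zero φ)]
      simp
    rw [dualObjective, mul_one, ← hsplit]
    congr with y
    rw [← min_add_add_left]
    simp
  have hbound : ∀ᶠ φ in atTop, ∀ᵐ y ∂ν, ‖min y φ‖ ≤ |y| := by
    filter_upwards [eventually_ge_atTop 0] with φ hφ
    refine ae_of_all _ fun y => abs_le.2 ⟨?_, (min_le_left y φ).trans (le_abs_self y)⟩
    exact le_min (neg_abs_le y) ((neg_nonpos.2 (abs_nonneg y)).trans hφ)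
  have hlim : ∀ y : ℝ, (fun _ => y) =ᶠ[atTop] fun φ => min y φ := fun y => by
    filter_upwards [eventually_ge_atTop y] with φ hφ
    exact (min_eq_left hφ).symm
  simpa only [hmin] using tendsto_integral_filter_of_dominated_convergence
    (F := fun φ y => min y φ) (f := fun y => y) _
    (Eventually.of_forall fun φ => (measurable_id.min measurable_const).aestronglyMeasurable)
    hbound hν.abs (ae_of_all _ fun y => tendsto_const_nhds.congr' (hlim y))

end Limits

lemma exists_mem_splitValues_le_iSup_dualObjective {ν : Measure ℝ} [IsProbabilityMeasure ν]
    (hν : Integrable id ν) {q : ℝ} (hq0 : 0 ≤ q) (hq1 : q ≤ 1) :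
    ∃ r ∈ splitValues ν q, r ≤ ⨆ φ, dualObjective ν q φ := by
  have hbdd : ∀ {r}, r ∈ splitValues ν q → BddAbove (range (dualObjective ν q)) := fun hr =>
    ⟨_, forall_mem_range.2 (dualObjective_le_of_mem_splitValues hν hr)⟩
  rcases hq0.eq_or_lt with rfl | hq0
  · have hr : (0 : ℝ) ∈ splitValues ν 0 := ⟨0, ν, zero_add ν, by simp, by simp⟩
    exact ⟨0, hr, le_of_tendsto' (tendsto_dualObjective_zero_atBot hν)
      fun φ => le_ciSup (hbdd hr) φ⟩
  rcases hq1.eq_or_lt with rfl | hq1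
  · have hr : ∫ y, y ∂ν ∈ splitValues ν 1 := ⟨ν, 0, add_zero ν, by simp, rfl⟩
    exact ⟨_, hr, le_of_tendsto' (tendsto_dualObjective_one_atTop hν)
      fun φ => le_ciSup (hbdd hr) φ⟩
  obtain ⟨φ, hlow, hhigh⟩ := exists_measure_Iio_le_le_measure_Iic ν hq0 hq1
  obtain ⟨ν₁, ν₀, hsum, hmass, hle, hge⟩ :=
    exists_add_eq_of_measure_Iio_le_le_measure_Iic ν hlow hhigh
  have hq : ν₁.real univ = q := by rw [measureReal_def, hmass, ENNReal.toReal_ofReal hq0.le]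
  have hr : ∫ y, y ∂ν₁ ∈ splitValues ν q := ⟨ν₁, ν₀, hsum, hq, rfl⟩
  refine ⟨_, hr, ?_⟩
  rw [← dualObjective_eq_integral hν hsum hle hge, hq]
  exact le_ciSup (hbdd hr) φ

/-- Strong duality (lower bound): among all couplings `π` of a fixed real marginal `ν`
with a `Bernoulli(q)` marginal for a Boolean coordinate, the infimum of
`∫ y · 1{d = true} dπ` equals `sup_φ (φ q + ∫ min(y − φ, 0) dν)`. -/
theorem stmt4 (ν : Measure ℝ) [IsProbabilityMeasure ν] (hν : Integrable id ν)
    (q : ℝ) (hq0 : 0 ≤ q) (hq1 : q ≤ 1) :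
    sInf {r : ℝ | ∃ π : Measure (ℝ × Bool), IsProbabilityMeasure π ∧
        π.map Prod.fst = ν ∧ (π (Set.univ ×ˢ {true})).toReal = q ∧
        r = ∫ yd : ℝ × Bool, (if yd.2 = true then yd.1 else 0) ∂π} =
      ⨆ φ : ℝ, (φ * q + ∫ y, min (y - φ) 0 ∂ν) := by
  rw [setOf_coupling_eq_splitValues ν hν q]
  obtain ⟨r, hr, hle⟩ := exists_mem_splitValues_le_iSup_dualObjective hν hq0 hq1
  exact csInf_eq_ciSup_of_forall_le (fun r hr => dualObjective_le_of_mem_splitValues hν hr) hr hle
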